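/- Let d: ℝ → S² be smooth with d' ≠ 0 and consider the perturbed curve d_ι = exp(ι skew(δβ)) d for a smooth field δβ with δβ·d = 0. Then the derivative at ι = 0 of |d_ι'| equals (d × d'/|d'|) · δβ'. -/

import Mathlib

open Matrix Real

noncomputable def skewM (w : Fin 3 → ℝ) : Matrix (Fin 3) (Fin 3) ℝ :=
  !![0, -w 2, w 1; w 2, 0, -w 0; -w 1, w 0, 0]

noncomputable def chiR (d₀ d : Fin 3 → ℝ) : Matrix (Fin 3) (Fin 3) ℝ :=
  (d₀ ⬝ᵥ d) • (1 : Matrix (Fin 3) (Fin 3) ℝ) + skewM (d₀ ⨯₃ d)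
    + (1 / (1 + d₀ ⬝ᵥ d)) • vecMulVec (d₀ ⨯₃ d) (d₀ ⨯₃ d)

noncomputable def nrm (w : Fin 3 → ℝ) : ℝ := Real.sqrt (w ⬝ᵥ w)

section Helpers

abbrev E3 := Fin 3 → ℝ
noncomputable abbrev Mat3 := Matrix (Fin 3) (Fin 3) ℝ

noncomputable def crossL : E3 →L[ℝ] E3 →L[ℝ] E3 :=
  LinearMap.toContinuousLinearMap
    { toFun := fun w => LinearMap.toContinuousLinearMap (crossProduct w)
      map_add' := by intro a b; ext v i; simp
      map_smul' := by intro c a; ext v i; simp }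

noncomputable def dotL : E3 →L[ℝ] E3 →L[ℝ] ℝ :=
  LinearMap.toContinuousLinearMap
    { toFun := fun w => LinearMap.toContinuousLinearMap
        { toFun := fun v => w ⬝ᵥ v
          map_add' := by intro a b; simp [dotProduct_add]
          map_smul' := by intro c a; simp [dotProduct_smul] }
      map_add' := by intro a b; ext v; simp [add_dotProduct]
      map_smul' := by intro c a; ext v; simp [smul_dotProduct] }

@[simp] lemma crossL_apply (w v : E3) : crossL w v = w ⨯₃ v := rfl
@[simp] lemma dotL_apply (w v : E3) : dotL w v = w ⬝ᵥ v := rfl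

lemma skewM_mulVec (w v : E3) : skewM w *ᵥ v = w ⨯₃ v := by
  ext i
  fin_cases i <;>
    simp [skewM, crossProduct, Matrix.mulVec, dotProduct, Fin.sum_univ_three] <;> ring

section MatrixNorm

attribute [local instance] Matrix.linftyOpNormedRing Matrix.linftyOpNormedAlgebra

noncomputable def skewL : E3 →L[ℝ] Mat3 :=
  LinearMap.toContinuousLinearMap
    { toFun := skewM
      map_add' := by
        intro a b; simp only [skewM]; ext i j
        fin_cases i <;> fin_cases j <;> simp [Matrix.add_apply] <;> ring
      map_smul' := by
        intro c a; simp only [skewM]; ext i j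
        fin_cases i <;> fin_cases j <;> simp [Matrix.smul_apply] }

noncomputable def entryL (i j : Fin 3) : Mat3 →L[ℝ] ℝ :=
  LinearMap.toContinuousLinearMap
    { toFun := fun M => M i j
      map_add' := fun _ _ => rfl
      map_smul' := fun _ _ => rfl }

noncomputable def mulVecR (v : E3) : Mat3 →L[ℝ] E3 :=
  LinearMap.toContinuousLinearMap
    { toFun := fun M => M *ᵥ v
      map_add' := fun M N => Matrix.add_mulVec M N v
      map_smul' := fun c M => by simp [Matrix.smul_mulVec] }

lemma contDiff_expM : ContDiff ℝ (⊤ : ℕ∞) (NormedSpace.exp : Mat3 → Mat3) := by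
  rw [contDiff_iff_contDiffAt]
  intro x
  exact (NormedSpace.analyticAt_exp_of_mem_ball (𝕂 := ℝ) x
    (by simp [NormedSpace.expSeries_radius_eq_top])).contDiffAt

lemma contDiff_mulVec {X : Type*} [NormedAddCommGroup X] [NormedSpace ℝ X]
    {M : X → Mat3} {v : X → E3} (hM : ContDiff ℝ (⊤ : ℕ∞) M) (hv : ContDiff ℝ (⊤ : ℕ∞) v) :
    ContDiff ℝ (⊤ : ℕ∞) (fun x => M x *ᵥ v x) := by
  rw [contDiff_pi]
  intro i
  have h : (fun x => (M x *ᵥ v x) i) = fun x => ∑ j, M x i j * v x j := by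
    funext x; simp [Matrix.mulVec, dotProduct]
  rw [h]
  exact ContDiff.sum fun j _ =>
    ((entryL i j).contDiff.comp hM).mul (contDiff_pi.mp hv j)

lemma contDiff_F (d δβ : ℝ → Fin 3 → ℝ) (hd : ContDiff ℝ (⊤ : ℕ∞) d) (hδβ : ContDiff ℝ (⊤ : ℕ∞) δβ) :
    ContDiff ℝ (⊤ : ℕ∞) (fun p : ℝ × ℝ => NormedSpace.exp (p.1 • skewM (δβ p.2)) *ᵥ d p.2) := by
  have hA : ContDiff ℝ (⊤ : ℕ∞) (fun p : ℝ × ℝ => p.1 • skewM (δβ p.2)) := by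
    have : ContDiff ℝ (⊤ : ℕ∞) (fun p : ℝ × ℝ => skewL (δβ p.2)) :=
      skewL.contDiff.comp (hδβ.comp contDiff_snd)
    exact ContDiff.smul contDiff_fst this
  exact contDiff_mulVec (contDiff_expM.comp hA) (hd.comp contDiff_snd)

lemma hasDerivAt_exp_mulVec (A : Mat3) (v : E3) :
    HasDerivAt (fun ι : ℝ => NormedSpace.exp (ι • A) *ᵥ v) (A *ᵥ v) 0 := by
  have h1 : HasDerivAt (fun ι : ℝ => NormedSpace.exp (ι • A)) A 0 := by
    have := hasDerivAt_exp_smul_const (𝕂 := ℝ) A 0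
    simp [NormedSpace.exp_zero] at this
    exact this
  have h2 := (mulVecR v).hasFDerivAt.comp_hasDerivAt (0 : ℝ) h1
  exact h2

end MatrixNorm

end Helpers

theorem variation_bending_strain (d δβ : ℝ → Fin 3 → ℝ)
    (hd : ContDiff ℝ (⊤ : ℕ∞) d) (hδβ : ContDiff ℝ (⊤ : ℕ∞) δβ)
    (hunit : ∀ s, d s ⬝ᵥ d s = 1) (horth : ∀ s, δβ s ⬝ᵥ d s = 0)
    (s : ℝ) (hd' : deriv d s ≠ 0) :
    deriv (fun ι : ℝ =>
        nrm (deriv (fun σ => NormedSpace.exp (ι • skewM (δβ σ)) *ᵥ d σ) s)) 0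
      = (d s ⨯₃ ((nrm (deriv d s))⁻¹ • deriv d s)) ⬝ᵥ deriv δβ s := by
  classical
  set F : ℝ × ℝ → (Fin 3 → ℝ) :=
    fun p => NormedSpace.exp (p.1 • skewM (δβ p.2)) *ᵥ d p.2 with hFdef
  have hF : ContDiff ℝ (⊤ : ℕ∞) F := contDiff_F d δβ hd hδβ
  have hFd : Differentiable ℝ F := hF.differentiable (by simp)
  have hF1 : ContDiff ℝ (⊤ : ℕ∞) (fderiv ℝ F) := hF.fderiv_right (by simp)
  have hF1d : Differentiable ℝ (fderiv ℝ F) := hF1.differentiable (by simp)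
  -- the partial derivative in σ
  have hpart : ∀ ι σ : ℝ,
      HasDerivAt (fun σ' => F (ι, σ')) (fderiv ℝ F (ι, σ) (0, 1)) σ := by
    intro ι σ
    have h1 : HasDerivAt (fun σ' : ℝ => ((ι, σ') : ℝ × ℝ)) ((0 : ℝ), (1 : ℝ)) σ :=
      HasDerivAt.prodMk (hasDerivAt_const σ ι) (hasDerivAt_id σ)
    exact (hFd (ι, σ)).hasFDerivAt.comp_hasDerivAt σ h1
  set g : ℝ → (Fin 3 → ℝ) := fun ι => fderiv ℝ F (ι, s) (0, 1) with hgdef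
  -- rewrite the outer function
  have houter : (fun ι : ℝ =>
      nrm (deriv (fun σ => NormedSpace.exp (ι • skewM (δβ σ)) *ᵥ d σ) s))
      = fun ι => Real.sqrt (g ι ⬝ᵥ g ι) := by
    funext ι
    rw [show deriv (fun σ => NormedSpace.exp (ι • skewM (δβ σ)) *ᵥ d σ) s = g ι from
      (hpart ι s).deriv, nrm]
  -- value of g at 0
  have h0fun : (fun σ : ℝ => F (0, σ)) = d := by
    funext σ
    show NormedSpace.exp ((0 : ℝ) • skewM (δβ σ)) *ᵥ d σ = d σ
    rw [zero_smul, NormedSpace.exp_zero, Matrix.one_mulVec]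
  have hg0 : g 0 = deriv d s := by
    have h6 := (hpart 0 s).deriv
    rw [h0fun] at h6
    exact h6.symm
  -- derivative of g at 0
  set f'' := fderiv ℝ (fderiv ℝ F) (0, s) with hf''def
  have hgder : HasDerivAt g (f'' (1, 0) (0, 1)) 0 := by
    have h1 : HasDerivAt (fun ι : ℝ => ((ι, s) : ℝ × ℝ)) ((1 : ℝ), (0 : ℝ)) 0 :=
      HasDerivAt.prodMk (hasDerivAt_id (0 : ℝ)) (hasDerivAt_const _ _)
    have h2 : HasDerivAt (fun ι : ℝ => fderiv ℝ F (ι, s)) (f'' (1, 0)) 0 :=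
      (hF1d (0, s)).hasFDerivAt.comp_hasDerivAt 0 h1
    have h3 := h2.clm_apply (hasDerivAt_const (0 : ℝ) ((0, 1) : ℝ × ℝ))
    simpa using h3
  have hsymm : f'' (1, 0) (0, 1) = f'' (0, 1) (1, 0) :=
    second_derivative_symmetric (fun y => (hFd y).hasFDerivAt) (hF1d (0, s)).hasFDerivAt _ _
  -- the other partial derivative
  have hpartι : ∀ σ : ℝ, HasDerivAt (fun ι => F (ι, σ)) (fderiv ℝ F (0, σ) (1, 0)) 0 := by
    intro σ
    have h1 : HasDerivAt (fun ι : ℝ => ((ι, σ) : ℝ × ℝ)) ((1 : ℝ), (0 : ℝ)) 0 :=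
      HasDerivAt.prodMk (hasDerivAt_id (0 : ℝ)) (hasDerivAt_const _ _)
    exact (hFd (0, σ)).hasFDerivAt.comp_hasDerivAt 0 h1
  have hΦ : ∀ σ : ℝ, fderiv ℝ F (0, σ) (1, 0) = δβ σ ⨯₃ d σ := by
    intro σ
    have h4 : HasDerivAt (fun ι : ℝ => NormedSpace.exp (ι • skewM (δβ σ)) *ᵥ d σ)
        (skewM (δβ σ) *ᵥ d σ) 0 := hasDerivAt_exp_mulVec _ _
    have h5 := (hpartι σ).unique h4
    rw [h5, skewM_mulVec]
  have hcross : HasDerivAt (fun σ => fderiv ℝ F (0, σ) (1, 0)) (f'' (0, 1) (1, 0)) s := by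
    have h1 : HasDerivAt (fun σ' : ℝ => ((0, σ') : ℝ × ℝ)) ((0 : ℝ), (1 : ℝ)) s :=
      HasDerivAt.prodMk (hasDerivAt_const _ _) (hasDerivAt_id _)
    have h2 : HasDerivAt (fun σ' : ℝ => fderiv ℝ F (0, σ')) (f'' (0, 1)) s :=
      (hF1d (0, s)).hasFDerivAt.comp_hasDerivAt s h1
    have h3 := h2.clm_apply (hasDerivAt_const s ((1, 0) : ℝ × ℝ))
    simpa using h3
  -- compute that derivative via the cross product
  have hδβ' : HasDerivAt δβ (deriv δβ s) s := (hδβ.differentiable (by simp) s).hasDerivAt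
  have hd'at : HasDerivAt d (deriv d s) s := (hd.differentiable (by simp) s).hasDerivAt
  have hc1 : HasDerivAt (fun σ => crossL (δβ σ)) (crossL (deriv δβ s)) s :=
    crossL.hasFDerivAt.comp_hasDerivAt s hδβ'
  have hc2 : HasDerivAt (fun σ => crossL (δβ σ) (d σ))
      (crossL (deriv δβ s) (d s) + crossL (δβ s) (deriv d s)) s := hc1.clm_apply hd'at
  have hc3 : HasDerivAt (fun σ => fderiv ℝ F (0, σ) (1, 0))
      (deriv δβ s ⨯₃ d s + δβ s ⨯₃ deriv d s) s := by
    have heq : (fun σ => fderiv ℝ F (0, σ) (1, 0)) = fun σ => crossL (δβ σ) (d σ) := by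
      funext σ; rw [hΦ σ]; rfl
    rw [heq]
    exact hc2
  have hD : f'' (0, 1) (1, 0) = deriv δβ s ⨯₃ d s + δβ s ⨯₃ deriv d s := hcross.unique hc3
  have hgD : HasDerivAt g (deriv δβ s ⨯₃ d s + δβ s ⨯₃ deriv d s) 0 := by
    rw [← hD, ← hsymm]; exact hgder
  -- final computation
  set v := deriv d s with hv
  set w := deriv δβ s with hw
  set D := w ⨯₃ d s + δβ s ⨯₃ v with hDdef
  have hdot : HasDerivAt (fun ι => g ι ⬝ᵥ g ι) (D ⬝ᵥ g 0 + g 0 ⬝ᵥ D) 0 := by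
    have h1 : HasDerivAt (fun ι => dotL (g ι)) (dotL D) 0 :=
      dotL.hasFDerivAt.comp_hasDerivAt 0 hgD
    exact h1.clm_apply hgD
  have hvv : (0 : ℝ) < v ⬝ᵥ v := by
    have h1 : (0 : ℝ) ≤ v ⬝ᵥ v := by
      simp only [dotProduct]
      exact Finset.sum_nonneg fun i _ => mul_self_nonneg _
    have h2 : v ⬝ᵥ v ≠ 0 := fun h => hd' (dotProduct_self_eq_zero.mp h)
    exact lt_of_le_of_ne h1 (Ne.symm h2)
  have hq0 : g 0 ⬝ᵥ g 0 ≠ 0 := by rw [hg0]; exact ne_of_gt hvv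
  have hsq : HasDerivAt Real.sqrt (1 / (2 * Real.sqrt (g 0 ⬝ᵥ g 0))) (g 0 ⬝ᵥ g 0) :=
    Real.hasDerivAt_sqrt hq0
  have hfinal : HasDerivAt (fun ι => Real.sqrt (g ι ⬝ᵥ g ι))
      ((1 / (2 * Real.sqrt (g 0 ⬝ᵥ g 0))) * (D ⬝ᵥ g 0 + g 0 ⬝ᵥ D)) 0 := hsq.comp 0 hdot
  rw [houter, hfinal.deriv, hg0]
  -- algebra
  have hn : Real.sqrt (v ⬝ᵥ v) ≠ 0 := by positivity
  simp only [nrm]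
  have hexpand : D ⬝ᵥ v + v ⬝ᵥ D = 2 * ((d s ⨯₃ v) ⬝ᵥ w) := by
    simp only [hDdef, crossProduct, dotProduct, Fin.sum_univ_three, LinearMap.mk₂_apply,
      Pi.add_apply, Matrix.cons_val_zero, Matrix.cons_val_one, Matrix.head_cons, Matrix.cons_val_two, Matrix.tail_cons]
    ring
  have hrhs : (d s ⨯₃ ((Real.sqrt (v ⬝ᵥ v))⁻¹ • v)) ⬝ᵥ w
      = (Real.sqrt (v ⬝ᵥ v))⁻¹ * ((d s ⨯₃ v) ⬝ᵥ w) := by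
    simp only [crossProduct, dotProduct, Fin.sum_univ_three, LinearMap.mk₂_apply,
      Pi.smul_apply, smul_eq_mul, Matrix.cons_val_zero, Matrix.cons_val_one, Matrix.head_cons, Matrix.cons_val_two, Matrix.tail_cons]
    ring
  rw [hexpand, hrhs]
  field_simp
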